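/- The trigonometric polynomials are dense in A_c(T): for every F ∈ B_c(T) and every ε > 0 there exist an integer N ≥ 0 and complex numbers a_{−N}, …, a_N such that the trigonometric polynomial p(t) = Σ_{k=−N}^{N} a_k e^{ikt} satisfies sup{ |F(β) − F(α) − ∫_α^β p(t) dt| : α ≤ β ≤ α + 2π } < ε. -/

import Mathlib

/-!
Subtracting the linear function `x ↦ (x / 2π) F(π)` turns `F` into a continuous
`2π`-periodic function `G`, which is uniformly within `ε / 3` of a trigonometric polynomial `q`
by density of the Fourier span in `C(AddCircle (2π), ℂ)`. The trigonometric polynomial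
`p = q' + F(π) / 2π` has primitive `q + (F(π) / 2π) x`, so
`F β - F α - ∫_α^β p = (G - q) β - (G - q) α` has modulus at most `2ε / 3`.
-/

open MeasureTheory Real

noncomputable def trigPoly (N : ℕ) (c : ℤ → ℂ) (t : ℝ) : ℂ :=
  ∑ k ∈ Finset.Icc (-(N : ℤ)) N, c k * Complex.exp (Complex.I * k * t)

section trigPoly

variable (N : ℕ)

theorem trigPoly_add (b c : ℤ → ℂ) (t : ℝ) :
    trigPoly N (b + c) t = trigPoly N b t + trigPoly N c t := by
  simp only [trigPoly, Pi.add_apply, add_mul, Finset.sum_add_distrib]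

theorem trigPoly_single_zero (z : ℂ) (t : ℝ) : trigPoly N (Pi.single 0 z) t = z := by
  rw [trigPoly, Finset.sum_eq_single_of_mem 0 (by simp)]
  · simp
  · intro k _ hk
    simp [hk]

theorem hasDerivAt_trigPoly (c : ℤ → ℂ) (t : ℝ) :
    HasDerivAt (trigPoly N c) (trigPoly N (fun k => Complex.I * k * c k) t) t := by
  unfold trigPoly
  refine HasDerivAt.fun_sum fun k _ => ?_
  have hexp := ((hasDerivAt_id (t : ℂ)).const_mul (Complex.I * k)).cexp.comp_ofReal
  exact (hexp.const_mul (c k)).congr_deriv (by simp only [id, mul_one]; ring)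

theorem continuous_trigPoly (c : ℤ → ℂ) : Continuous (trigPoly N c) :=
  continuous_iff_continuousAt.2 fun t => (hasDerivAt_trigPoly N c t).continuousAt

theorem integral_trigPoly_eq_sub (c : ℤ → ℂ) (c₀ : ℂ) (α β : ℝ) :
    ∫ t in α..β, trigPoly N ((fun k => Complex.I * k * c k) + Pi.single 0 c₀) t =
      (c₀ * β + trigPoly N c β) - (c₀ * α + trigPoly N c α) := by
  refine intervalIntegral.integral_eq_sub_of_hasDerivAt
    (f := fun t : ℝ => c₀ * t + trigPoly N c t) (fun t _ => ?_)
    ((continuous_trigPoly N _).intervalIntegrable α β)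
  rw [trigPoly_add, trigPoly_single_zero, add_comm]
  simpa using
    ((hasDerivAt_id (t : ℂ)).comp_ofReal.const_mul c₀).fun_add (hasDerivAt_trigPoly N c t)

end trigPoly

theorem fourier_coe_two_pi (n : ℤ) (x : ℝ) :
    fourier n (x : AddCircle (2 * π)) = Complex.exp (Complex.I * n * x) := by
  rw [fourier_coe_apply]
  congr 1
  field_simp
  push_cast
  ring

theorem exists_trigPoly_eq_of_mem_span_fourier {q : C(AddCircle (2 * π), ℂ)}
    (hq : q ∈ Submodule.span ℂ (Set.range fourier)) :
    ∃ (N : ℕ) (c : ℤ → ℂ), ∀ x : ℝ, q x = trigPoly N c x := by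
  obtain ⟨c, rfl⟩ := Finsupp.mem_span_range_iff_exists_finsupp.mp hq
  set N : ℕ := c.support.sup Int.natAbs
  have hsupp : c.support ⊆ Finset.Icc (-(N : ℤ)) N := fun k hk => by
    have : k.natAbs ≤ N := Finset.le_sup (f := Int.natAbs) hk
    rw [Finset.mem_Icc]; omega
  refine ⟨N, c, fun x => ?_⟩
  simp only [Finsupp.sum, ContinuousMap.coe_sum, ContinuousMap.coe_smul, Finset.sum_apply,
    Pi.smul_apply, fourier_coe_two_pi, smul_eq_mul, trigPoly]
  exact Finset.sum_subset hsupp fun k _ hk => by simp [Finsupp.notMem_support_iff.mp hk]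

theorem exists_trigPoly_norm_sub_lt {G : ℝ → ℂ} (hG : Continuous G)
    (hper : Function.Periodic G (2 * π)) {ε : ℝ} (hε : 0 < ε) :
    ∃ (N : ℕ) (c : ℤ → ℂ), ∀ x : ℝ, ‖G x - trigPoly N c x‖ < ε := by
  have : Fact (0 < 2 * π) := ⟨two_pi_pos⟩
  let g : C(AddCircle (2 * π), ℂ) := ⟨hper.lift, hG.quotient_liftOn' _⟩
  have hg : g ∈ closure
      (Submodule.span ℂ (Set.range (@fourier (2 * π))) : Set C(AddCircle (2 * π), ℂ)) := by
    rw [← Submodule.topologicalClosure_coe, span_fourier_closure_eq_top]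
    trivial
  obtain ⟨q, hq, hgq⟩ := Metric.mem_closure_iff.mp hg ε hε
  obtain ⟨N, c, hqc⟩ := exists_trigPoly_eq_of_mem_span_fourier hq
  refine ⟨N, c, fun x => ?_⟩
  rw [← hqc, ← dist_eq_norm]
  exact (ContinuousMap.dist_apply_le_dist (x : AddCircle (2 * π))).trans_lt hgq

theorem periodic_sub_div_smul_of_map_add {E : Type*} [AddCommGroup E] [Module ℝ E] {F : ℝ → E}
    {T : ℝ} (hT : T ≠ 0) {D : E} (hF : ∀ x, F (x + T) = F x + D) :
    Function.Periodic (fun x => F x - (x / T) • D) T := fun x => by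
  simp only [hF, add_div, div_self hT, add_smul, one_smul]
  abel

theorem trigonometric_polynomials_dense (F : ℝ → ℂ)
    (hFcont : Continuous F)
    (hFper : ∀ x : ℝ, F (x + 2 * π) = F x + F π) :
    ∀ ε > (0 : ℝ), ∃ (N : ℕ) (a : ℤ → ℂ),
      sSup {r : ℝ | ∃ α β : ℝ, α ≤ β ∧ β ≤ α + 2 * π ∧
        r = ‖(F β - F α -
          ∫ t in α..β, ∑ k ∈ Finset.Icc (-(N : ℤ)) (N : ℤ),
            a k * Complex.exp (Complex.I * (k : ℂ) * (t : ℂ)))‖} < ε := by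
  intro ε hε
  set G : ℝ → ℂ := fun x => F x - (x / (2 * π)) • F π
  obtain ⟨N, c, hc⟩ := exists_trigPoly_norm_sub_lt (G := G) (by fun_prop)
    (periodic_sub_div_smul_of_map_add two_pi_pos.ne' hFper) (by positivity : 0 < ε / 3)
  set c₀ : ℂ := F π / (2 * π)
  refine ⟨N, (fun k => Complex.I * k * c k) + Pi.single 0 c₀, ?_⟩
  refine lt_of_le_of_lt (b := 2 * (ε / 3))
    (csSup_le ⟨0, 0, 0, le_rfl, by positivity, by simp⟩ ?_) (by linarith)
  rintro _ ⟨α, β, -, -, rfl⟩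
  have hsplit : F β - F α - ((c₀ * β + trigPoly N c β) - (c₀ * α + trigPoly N c α)) =
      (G β - trigPoly N c β) - (G α - trigPoly N c α) := by
    simp only [G, c₀, Complex.real_smul]
    push_cast
    ring
  calc _ = ‖F β - F α - ((c₀ * β + trigPoly N c β) - (c₀ * α + trigPoly N c α))‖ := by
        rw [← integral_trigPoly_eq_sub]; rfl
    _ ≤ ‖G β - trigPoly N c β‖ + ‖G α - trigPoly N c α‖ := hsplit ▸ norm_sub_le _ _
    _ ≤ 2 * (ε / 3) := by linarith [hc α, hc β]
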